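/- For any partition λ of n, O(λ) ≡ O(λ') (mod 4) if and only if the number of squares of the Young diagram of λ with even hook length is even. -/
import Mathlib

/-- The number of odd parts (odd row lengths) of the partition given by a Young diagram. -/
def oddParts (mu : YoungDiagram) : Nat :=
  ((Finset.range mu.card).filter (fun i => Odd (mu.rowLen i))).card


/-- The hook length of the square `(r, c)` of a Young diagram. -/
def hookLen (mu : YoungDiagram) (r c : Nat) : Nat :=
  mu.rowLen r + mu.colLen c - r - c - 1

/-- The number of squares of even hook length in a Young diagram. -/
def evenHooks (mu : YoungDiagram) : Nat :=
  (mu.cells.filter (fun x => Even (hookLen mu x.1 x.2))).card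

open Finset

namespace Stmt16Aux

lemma two2 : (2 : ZMod 2) = 0 := by decide

lemma four4 : (4 : ZMod 4) = 0 := by decide

lemma rowLen_le_card (μ : YoungDiagram) (i : ℕ) : μ.rowLen i ≤ μ.card := by
  rw [YoungDiagram.rowLen_eq_card]
  exact Finset.card_le_card (fun x hx => by
    rw [YoungDiagram.mem_row_iff] at hx
    exact (YoungDiagram.mem_cells _).mpr hx.1)

lemma colLen_le_card (μ : YoungDiagram) (j : ℕ) : μ.colLen j ≤ μ.card := by
  rw [YoungDiagram.colLen_eq_card]
  exact Finset.card_le_card (fun x hx => by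
    rw [YoungDiagram.mem_col_iff] at hx
    exact (YoungDiagram.mem_cells _).mpr hx.1)

lemma cells_eq (μ : YoungDiagram) :
    μ.cells = ((range μ.card) ×ˢ (range μ.card)).filter (fun x => x ∈ μ) := by
  ext ⟨i, j⟩
  simp only [Finset.mem_filter, Finset.mem_product, Finset.mem_range, YoungDiagram.mem_cells]
  constructor
  · intro hm
    refine ⟨⟨?_, ?_⟩, hm⟩
    · exact lt_of_lt_of_le (YoungDiagram.mem_iff_lt_colLen.mp hm) (colLen_le_card μ j)
    · exact lt_of_lt_of_le (YoungDiagram.mem_iff_lt_rowLen.mp hm) (rowLen_le_card μ i)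
  · exact fun h => h.2

lemma sum_cells {M : Type*} [AddCommMonoid M] (μ : YoungDiagram) (f : ℕ → ℕ → M) :
    ∑ x ∈ μ.cells, f x.1 x.2 = ∑ i ∈ range μ.card, ∑ j ∈ range (μ.rowLen i), f i j := by
  rw [cells_eq μ, Finset.sum_filter, Finset.sum_product]
  refine Finset.sum_congr rfl (fun i _ => ?_)
  rw [← Finset.sum_filter]
  refine Finset.sum_congr ?_ (fun _ _ => rfl)
  ext j
  simp only [Finset.mem_filter, Finset.mem_range]
  rw [YoungDiagram.mem_iff_lt_rowLen]
  have := rowLen_le_card μ i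
  omega

lemma card_transpose (μ : YoungDiagram) : μ.transpose.card = μ.card := by
  show ((Equiv.prodComm ℕ ℕ).finsetCongr μ.cells).card = _
  rw [Equiv.finsetCongr_apply, Finset.card_map]

lemma sum_transpose {M : Type*} [AddCommMonoid M] (μ : YoungDiagram) (f : ℕ → ℕ → M) :
    ∑ x ∈ μ.transpose.cells, f x.1 x.2 = ∑ x ∈ μ.cells, f x.2 x.1 := by
  show ∑ x ∈ (Equiv.prodComm ℕ ℕ).finsetCongr μ.cells, _ = _
  rw [Equiv.finsetCongr_apply, Finset.sum_map]
  rfl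

lemma card_eq_sum_rowLens (μ : YoungDiagram) :
    μ.card = ∑ i ∈ range μ.card, μ.rowLen i := by
  calc μ.card = ∑ _x ∈ μ.cells, 1 := Finset.card_eq_sum_ones _
    _ = ∑ i ∈ range μ.card, ∑ _j ∈ range (μ.rowLen i), 1 := sum_cells μ (fun _ _ => 1)
    _ = ∑ i ∈ range μ.card, μ.rowLen i := by simp

lemma twoA (μ : YoungDiagram) :
    2 * ∑ x ∈ μ.cells, (μ.rowLen x.1 - x.2 - 1)
      = ∑ i ∈ range μ.card, μ.rowLen i * (μ.rowLen i - 1) := by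
  rw [sum_cells μ (fun i j => μ.rowLen i - j - 1), Finset.mul_sum]
  refine Finset.sum_congr rfl (fun i _ => ?_)
  have h1 : ∑ j ∈ range (μ.rowLen i), (μ.rowLen i - j - 1)
      = ∑ j ∈ range (μ.rowLen i), j := by
    rw [← Finset.sum_range_reflect (fun j => j)]
    exact Finset.sum_congr rfl (fun j hj => by omega)
  rw [h1, mul_comm, Finset.sum_range_id_mul_two]

lemma sq_zmod4 (m : ℕ) : ((m * m : ℕ) : ZMod 4) = if Odd m then 1 else 0 := by
  rcases Nat.even_or_odd m with ⟨k, rfl⟩ | ⟨k, rfl⟩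
  · rw [if_neg (by rw [Nat.odd_iff]; omega)]
    push_cast
    linear_combination ((k : ZMod 4) * k) * four4
  · rw [if_pos ⟨k, rfl⟩]
    push_cast
    linear_combination ((k : ZMod 4) * k + k) * four4

lemma cast2_even_ite (h : ℕ) :
    (if Even h then (1 : ZMod 2) else 0) = (h : ZMod 2) + 1 := by
  rcases Nat.even_or_odd h with ⟨k, rfl⟩ | ⟨k, rfl⟩
  · rw [if_pos ⟨k, rfl⟩]
    push_cast
    linear_combination (-(k : ZMod 2)) * two2
  · rw [if_neg (by rw [Nat.even_iff]; omega)]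
    push_cast
    linear_combination (-(k : ZMod 2) - 1) * two2

lemma cast2_odd_ite (m : ℕ) :
    (if Odd m then (1 : ZMod 2) else 0) = (m : ZMod 2) := by
  rcases Nat.even_or_odd m with ⟨k, rfl⟩ | ⟨k, rfl⟩
  · rw [if_neg (by rw [Nat.odd_iff]; omega)]
    push_cast
    linear_combination (-(k : ZMod 2)) * two2
  · rw [if_pos ⟨k, rfl⟩]
    push_cast
    linear_combination (-(k : ZMod 2)) * two2

lemma key (μ : YoungDiagram) :
    ((2 * ∑ x ∈ μ.cells, (μ.rowLen x.1 - x.2 - 1) : ℕ) : ZMod 4)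
      = (oddParts μ : ZMod 4) - (μ.card : ZMod 4) := by
  rw [twoA μ, Nat.cast_sum]
  have hO : (oddParts μ : ZMod 4)
      = ∑ i ∈ range μ.card, if Odd (μ.rowLen i) then (1 : ZMod 4) else 0 := by
    rw [oddParts, Finset.card_filter, Nat.cast_sum]
    exact Finset.sum_congr rfl (fun i _ => by split <;> simp)
  have hc : (μ.card : ZMod 4) = ∑ i ∈ range μ.card, (μ.rowLen i : ZMod 4) := by
    conv_lhs => rw [card_eq_sum_rowLens μ]
    rw [Nat.cast_sum]
  rw [hO, hc, ← Finset.sum_sub_distrib]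
  refine Finset.sum_congr rfl (fun i _ => ?_)
  have h1 : μ.rowLen i * (μ.rowLen i - 1) + μ.rowLen i = μ.rowLen i * μ.rowLen i := by
    cases h : μ.rowLen i with
    | zero => simp
    | succ k => simp only [Nat.succ_sub_one]; ring
  have h2 : ((μ.rowLen i * (μ.rowLen i - 1) : ℕ) : ZMod 4)
      = ((μ.rowLen i * μ.rowLen i : ℕ) : ZMod 4) - (μ.rowLen i : ZMod 4) := by
    rw [← h1]; push_cast; ring
  rw [h2, sq_zmod4]

lemma oddParts_parity (μ : YoungDiagram) : (oddParts μ : ZMod 2) = (μ.card : ZMod 2) := by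
  have hO : (oddParts μ : ZMod 2)
      = ∑ i ∈ range μ.card, if Odd (μ.rowLen i) then (1 : ZMod 2) else 0 := by
    rw [oddParts, Finset.card_filter, Nat.cast_sum]
    exact Finset.sum_congr rfl (fun i _ => by split <;> simp)
  have hc : (μ.card : ZMod 2) = ∑ i ∈ range μ.card, (μ.rowLen i : ZMod 2) := by
    conv_lhs => rw [card_eq_sum_rowLens μ]
    rw [Nat.cast_sum]
  rw [hO, hc]
  exact Finset.sum_congr rfl (fun i _ => cast2_odd_ite _)

lemma evenHooks_parity (μ : YoungDiagram) :
    (evenHooks μ : ZMod 2)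
      = (((∑ x ∈ μ.cells, hookLen μ x.1 x.2) + μ.card : ℕ) : ZMod 2) := by
  calc (evenHooks μ : ZMod 2)
      = ∑ x ∈ μ.cells, if Even (hookLen μ x.1 x.2) then (1 : ZMod 2) else 0 := by
        rw [evenHooks, Finset.card_filter, Nat.cast_sum]
        exact Finset.sum_congr rfl (fun x _ => by split <;> simp)
    _ = ∑ x ∈ μ.cells, ((hookLen μ x.1 x.2 : ZMod 2) + 1) :=
        Finset.sum_congr rfl (fun x _ => cast2_even_ite _)
    _ = ((∑ x ∈ μ.cells, hookLen μ x.1 x.2 : ℕ) : ZMod 2) + ((μ.card : ℕ) : ZMod 2) := by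
        rw [Finset.sum_add_distrib, Nat.cast_sum, Finset.sum_const, nsmul_eq_mul, mul_one]
    _ = (((∑ x ∈ μ.cells, hookLen μ x.1 x.2) + μ.card : ℕ) : ZMod 2) := by push_cast; ring

end Stmt16Aux

open Stmt16Aux in
theorem stmt16 (n : ℕ) (μ : YoungDiagram) (h : μ.card = n) :
    (oddParts μ ≡ oddParts μ.transpose [MOD 4]) ↔ Even (evenHooks μ) := by
  subst h
  have hsplit : (∑ x ∈ μ.cells, hookLen μ x.1 x.2)
      = (∑ x ∈ μ.cells, (μ.rowLen x.1 - x.2 - 1))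
        + (∑ x ∈ μ.cells, (μ.colLen x.2 - x.1 - 1)) + μ.card := by
    have hcard : μ.card = ∑ _x ∈ μ.cells, 1 := Finset.card_eq_sum_ones _
    rw [hcard, ← Finset.sum_add_distrib, ← Finset.sum_add_distrib]
    refine Finset.sum_congr rfl (fun x hx => ?_)
    have hm : x ∈ μ := (YoungDiagram.mem_cells x).mp hx
    have h1 : x.2 < μ.rowLen x.1 := YoungDiagram.mem_iff_lt_rowLen.mp (by simpa using hm)
    have h2 : x.1 < μ.colLen x.2 := YoungDiagram.mem_iff_lt_colLen.mp (by simpa using hm)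
    unfold hookLen
    omega
  have hmod2 : evenHooks μ ≡ (∑ x ∈ μ.cells, hookLen μ x.1 x.2) + μ.card [MOD 2] :=
    (ZMod.natCast_eq_natCast_iff _ _ _).mp (evenHooks_parity μ)
  have hmod4 : 2 * evenHooks μ
      ≡ 2 * ((∑ x ∈ μ.cells, hookLen μ x.1 x.2) + μ.card) [MOD 4] := by
    have h' := Nat.ModEq.mul_left' (c := 2) hmod2
    rwa [(by norm_num : (2 : ℕ) * 2 = 4)] at h'
  have hE4 : ((2 * evenHooks μ : ℕ) : ZMod 4)
      = ((2 * ((∑ x ∈ μ.cells, hookLen μ x.1 x.2) + μ.card) : ℕ) : ZMod 4) :=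
    (ZMod.natCast_eq_natCast_iff _ _ _).mpr hmod4
  have h2A : ((2 * ∑ x ∈ μ.cells, (μ.rowLen x.1 - x.2 - 1) : ℕ) : ZMod 4)
      = (oddParts μ : ZMod 4) - (μ.card : ZMod 4) := key μ
  have hBA : (∑ x ∈ μ.cells, (μ.colLen x.2 - x.1 - 1))
      = ∑ x ∈ μ.transpose.cells, (μ.transpose.rowLen x.1 - x.2 - 1) := by
    rw [sum_transpose μ (fun i j => μ.transpose.rowLen i - j - 1)]
    exact Finset.sum_congr rfl (fun x _ => by rw [YoungDiagram.rowLen_transpose])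
  have h2B : ((2 * ∑ x ∈ μ.cells, (μ.colLen x.2 - x.1 - 1) : ℕ) : ZMod 4)
      = (oddParts μ.transpose : ZMod 4) - (μ.card : ZMod 4) := by
    rw [hBA]
    have h' := key μ.transpose
    rwa [card_transpose] at h'
  have hfin : ((2 * evenHooks μ : ℕ) : ZMod 4)
      = ((oddParts μ + oddParts μ.transpose + 2 * μ.card : ℕ) : ZMod 4) := by
    have e1 : (2 * ((∑ x ∈ μ.cells, hookLen μ x.1 x.2) + μ.card) : ℕ)
        = 2 * (∑ x ∈ μ.cells, (μ.rowLen x.1 - x.2 - 1))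
          + (2 * (∑ x ∈ μ.cells, (μ.colLen x.2 - x.1 - 1)) + 4 * μ.card) := by
      rw [hsplit]; ring
    rw [hE4, e1, Nat.cast_add, Nat.cast_add, h2A, h2B]
    push_cast
    ring
  have hfin' : (2 * evenHooks μ) % 4 = (oddParts μ + oddParts μ.transpose + 2 * μ.card) % 4 :=
    (ZMod.natCast_eq_natCast_iff' _ _ _).mp hfin
  have hp1 : oddParts μ % 2 = μ.card % 2 :=
    (ZMod.natCast_eq_natCast_iff' _ _ _).mp (oddParts_parity μ)
  have hp2 : oddParts μ.transpose % 2 = μ.card % 2 := by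
    have h' := (ZMod.natCast_eq_natCast_iff' _ _ _).mp (oddParts_parity μ.transpose)
    rwa [card_transpose] at h'
  rw [Nat.ModEq, Nat.even_iff]
  omega
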